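/- Define V₂(x) = 0, f₂(x) = −(1+x²)^{-3}, k₂⁺(x) = (1+x²)^{-3} and k₂⁻(x) = 0, and let V₁, f₁, k₁⁺, k₁⁻ be as in Example (i): V₁(x) = (1+x²)^{-1}, f₁(x) = 3(1+x²)^{-3}, k₁⁺(x) = 0, k₁⁻(x) = (1+6x²)(1+x²)^{-3}. Then for every x ∈ ℝ: (d²/dx²)V₂(x) + f₂(x) + k₂⁺(x) − k₂⁻(x) = 0, 0 ≤ V₂(x) ≤ (1+x²)^{-1}, k₂⁺(x) ≥ 0, k₂⁻(x) ≥ 0, (V₂(x) − 0)·k₂⁺(x) = 0 and ((1+x²)^{-1} − V₂(x))·k₂⁻(x) = 0. Moreover, although the data are ordered — f₁(x) ≥ f₂(x), φ₁(x) = (1+x²)^{-1} ≥ 0 = φ₂(x), the obstacles coincide, and V₁(x) ≥ V₂(x) — the reflection parts fail to be comparable: k₁⁺(x) < k₂⁺(x) and k₁⁻(x) > k₂⁻(x) for every x ∈ ℝ. -/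
import Mathlib


/-- Example (i) of Remark 5.1: the first solution. -/
noncomputable def V₁ (x : ℝ) : ℝ := (1 + x ^ 2)⁻¹

/-- The first free term. -/
noncomputable def f₁ (x : ℝ) : ℝ := 3 * ((1 + x ^ 2) ^ 3)⁻¹

/-- The first lower reflection part. -/
noncomputable def k₁p (_x : ℝ) : ℝ := 0

/-- The first upper reflection part. -/
noncomputable def k₁m (x : ℝ) : ℝ := (1 + 6 * x ^ 2) * ((1 + x ^ 2) ^ 3)⁻¹

/-- The second solution. -/
noncomputable def V₂ (_x : ℝ) : ℝ := 0

/-- The second free term. -/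
noncomputable def f₂ (x : ℝ) : ℝ := -((1 + x ^ 2) ^ 3)⁻¹

/-- The second lower reflection part. -/
noncomputable def k₂p (x : ℝ) : ℝ := ((1 + x ^ 2) ^ 3)⁻¹

/-- The second upper reflection part. -/
noncomputable def k₂m (_x : ℝ) : ℝ := 0

/-- The first terminal value. -/
noncomputable def φ₁ (x : ℝ) : ℝ := (1 + x ^ 2)⁻¹

/-- The second terminal value. -/
noncomputable def φ₂ (_x : ℝ) : ℝ := 0

theorem stmt_17 : ∀ x : ℝ,
    deriv (deriv V₂) x + f₂ x + k₂p x - k₂m x = 0 ∧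
    0 ≤ V₂ x ∧ V₂ x ≤ (1 + x ^ 2)⁻¹ ∧
    0 ≤ k₂p x ∧ 0 ≤ k₂m x ∧
    (V₂ x - 0) * k₂p x = 0 ∧ ((1 + x ^ 2)⁻¹ - V₂ x) * k₂m x = 0 ∧
    f₁ x ≥ f₂ x ∧ φ₁ x = (1 + x ^ 2)⁻¹ ∧ φ₁ x ≥ φ₂ x ∧ φ₂ x = 0 ∧
    V₁ x ≥ V₂ x ∧
    k₁p x < k₂p x ∧ k₁m x > k₂m x := by
  intro x
  have hx : (0:ℝ) < 1 + x ^ 2 := by positivity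
  have hV2 : V₂ = fun _ => (0:ℝ) := rfl
  have hd : deriv (deriv V₂) x = 0 := by
    rw [hV2, deriv_const']; simp
  refine ⟨?_, ?_, ?_, ?_, ?_, ?_, ?_, ?_, ?_, ?_, ?_, ?_, ?_, ?_⟩
  · simp [hd, f₂, k₂p, k₂m]
  · simp [V₂]
  · simp [V₂]; positivity
  · simp [k₂p]; positivity
  · simp [k₂m]
  · simp [V₂]
  · simp [k₂m]
  · simp only [f₁, f₂, ge_iff_le]; nlinarith [pow_pos hx 3, inv_pos.2 (pow_pos hx 3)]
  · rfl
  · simp [φ₁, φ₂]; positivity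
  · rfl
  · simp [V₁, V₂]; positivity
  · simp [k₁p, k₂p]; positivity
  · simp [k₁m, k₂m]; positivity
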